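/- arXiv:1001.5254 — 10 statements merged into one kernel-verified Lean document; each statement's English description precedes it below -/
import Mathlib

section
/- Let g : [t₀,∞) → ℝ be a nonnegative C¹ function satisfying ġ(t) ≤ -γ(t)g(t) + α(t,g(t)) + β(t) for all t ≥ t₀, where β, γ are continuous on [t₀,∞), and α(t,y) ≥ 0 is continuous in t and nondecreasing in y. Suppose there exists μ ∈ C¹([t₀,∞)) with μ(t) > 0 such that α(t, 1/μ(t)) + β(t) ≤ (1/μ(t))(γ(t) - μ'(t)/μ(t)) for all t ≥ t₀, and μ(t₀)g(t₀) < 1. Then g(t) < 1/μ(t) for all t ≥ t₀. -/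
/-!
The gap `w = 1/μ - g` to the barrier satisfies `w' ≥ -γ w` as long as `g` stays below the
barrier: there `α(t, g) ≤ α(t, 1/μ)` by monotonicity, and the comparison hypothesis on `μ` is
exactly what is left. On the interval up to the first time `w` could vanish, `γ` is bounded
by some `C`, so `w · exp(C t)` is nondecreasing and `w` stays bounded away from zero.
-/

open Set

theorem monotoneOn_mul_exp_of_neg_mul_le_deriv {w w' : ℝ → ℝ} {a b C : ℝ}
    (hw : ∀ s ∈ Icc a b, HasDerivAt w (w' s) s) (hle : ∀ s ∈ Ioo a b, -C * w s ≤ w' s) :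
    MonotoneOn (fun s => w s * Real.exp (C * s)) (Icc a b) := by
  have hderiv : ∀ s ∈ Icc a b, HasDerivAt (fun s => w s * Real.exp (C * s))
      ((w' s + C * w s) * Real.exp (C * s)) s := fun s hs =>
    ((hw s hs).fun_mul ((hasDerivAt_id' s).const_mul C).exp).congr_deriv (by ring)
  refine monotoneOn_of_hasDerivWithinAt_nonneg (convex_Icc a b)
    (fun s hs => (hderiv s hs).continuousAt.continuousWithinAt)
    (fun s hs => (hderiv s (interior_subset hs)).hasDerivWithinAt) fun s hs => ?_
  rw [interior_Icc] at hs
  have := hle s hs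
  exact mul_nonneg (by linarith) (Real.exp_pos _).le

theorem exists_first_nonpos {w : ℝ → ℝ} {a t : ℝ} (hw : ContinuousOn w (Icc a t))
    (hat : a ≤ t) (ht : w t ≤ 0) : ∃ c ∈ Icc a t, w c ≤ 0 ∧ ∀ s ∈ Ico a c, 0 < w s := by
  set S := Icc a t ∩ w ⁻¹' Iic 0
  have hS : IsClosed S := hw.preimage_isClosed_of_isClosed isClosed_Icc isClosed_Iic
  have hSne : S.Nonempty := ⟨t, ⟨hat, le_rfl⟩, ht⟩
  have hSbdd : BddBelow S := ⟨a, fun s hs => hs.1.1⟩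
  obtain ⟨hc, hwc⟩ := hS.csInf_mem hSne hSbdd
  refine ⟨sInf S, hc, hwc, fun s hs => ?_⟩
  by_contra! hws
  exact (csInf_le hSbdd ⟨⟨hs.1, hs.2.le.trans hc.2⟩, hws⟩).not_gt hs.2

theorem pos_of_neg_mul_le_deriv {w w' γ : ℝ → ℝ} {a : ℝ}
    (hw : ∀ s ∈ Ici a, HasDerivAt w (w' s) s) (hγ : ContinuousOn γ (Ici a)) (ha : 0 < w a)
    (hle : ∀ s ∈ Ici a, 0 < w s → -γ s * w s ≤ w' s) : ∀ t ∈ Ici a, 0 < w t := by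
  intro t ht
  by_contra! hwt
  obtain ⟨c, hc, hwc, hpos⟩ := exists_first_nonpos
    (fun s hs => (hw s hs.1).continuousAt.continuousWithinAt) ht hwt
  obtain ⟨C, hC⟩ := isCompact_Icc.bddAbove_image (hγ.mono Icc_subset_Ici_self)
  have hmono : MonotoneOn (fun s => w s * Real.exp (C * s)) (Icc a c) := by
    refine monotoneOn_mul_exp_of_neg_mul_le_deriv (fun s hs => hw s hs.1) fun s hs => ?_
    have hws := hpos s (Ioo_subset_Ico_self hs)
    have hγC : γ s ≤ C := hC ⟨s, Ioo_subset_Icc_self hs, rfl⟩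
    exact (mul_le_mul_of_nonneg_right (neg_le_neg hγC) hws.le).trans (hle s hs.1.le hws)
  have hca : w a * Real.exp (C * a) ≤ w c * Real.exp (C * c) :=
    hmono ⟨le_rfl, hc.1⟩ ⟨hc.1, le_rfl⟩ hc.1
  exact (mul_pos ha (Real.exp_pos _)).not_ge
    (hca.trans (mul_nonpos_of_nonpos_of_nonneg hwc (Real.exp_pos _).le))

theorem stmt0_general
    (t₀ : ℝ)
    (g g' γ β μ μ' : ℝ → ℝ) (α : ℝ → ℝ → ℝ)
    (hgnonneg : ∀ t ∈ Ici t₀, 0 ≤ g t)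
    (hg : ∀ t ∈ Ici t₀, HasDerivAt g (g' t) t)
    (hγ : ContinuousOn γ (Ici t₀))
    (hαmono : ∀ t ∈ Ici t₀, ∀ y z, 0 ≤ y → y ≤ z → α t y ≤ α t z)
    (hineq : ∀ t ∈ Ici t₀, g' t ≤ -γ t * g t + α t (g t) + β t)
    (hμpos : ∀ t ∈ Ici t₀, 0 < μ t)
    (hμ : ∀ t ∈ Ici t₀, HasDerivAt μ (μ' t) t)
    (hcomp : ∀ t ∈ Ici t₀, α t (1 / μ t) + β t ≤ (1 / μ t) * (γ t - μ' t / μ t))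
    (hinit : μ t₀ * g t₀ < 1) :
    ∀ t ∈ Ici t₀, g t < 1 / μ t := by
  have hgap : ∀ t ∈ Ici t₀, HasDerivAt (fun s => 1 / μ s - g s) (-μ' t / μ t ^ 2 - g' t) t :=
    fun t ht => by simpa only [one_div] using ((hμ t ht).fun_inv (hμpos t ht).ne').fun_sub (hg t ht)
  have hgap_init : 0 < 1 / μ t₀ - g t₀ := sub_pos.2 ((lt_div_iff₀' (hμpos t₀ self_mem_Ici)).2 hinit)
  have hgrowth : ∀ t ∈ Ici t₀, 0 < 1 / μ t - g t →
      -γ t * (1 / μ t - g t) ≤ -μ' t / μ t ^ 2 - g' t := fun t ht hpos => by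
    linear_combination hineq t ht + hcomp t ht +
      hαmono t ht (g t) (1 / μ t) (hgnonneg t ht) (sub_pos.1 hpos).le
  intro t ht
  exact sub_pos.1 (pos_of_neg_mul_le_deriv hgap hγ hgap_init hgrowth t ht)

/-- Theorem 1 (main continuous inequality): if `ġ ≤ -γ g + α(t,g) + β`,
`α(t, 1/μ) + β ≤ (1/μ)(γ - μ'/μ)` and `μ(t₀) g(t₀) < 1`, then `g < 1/μ` on `[t₀,∞)`. -/
theorem stmt0
    (t₀ : ℝ) (ht₀ : 0 ≤ t₀)
    (g g' γ β μ μ' : ℝ → ℝ) (α : ℝ → ℝ → ℝ)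
    (hgnonneg : ∀ t ∈ Ici t₀, 0 ≤ g t)
    (hg : ∀ t ∈ Ici t₀, HasDerivAt g (g' t) t)
    (hg'cont : ContinuousOn g' (Ici t₀))
    (hβ : ContinuousOn β (Ici t₀))
    (hγ : ContinuousOn γ (Ici t₀))
    (hαnonneg : ∀ t ∈ Ici t₀, ∀ y, 0 ≤ y → 0 ≤ α t y)
    (hαcont : ∀ y, 0 ≤ y → ContinuousOn (fun t => α t y) (Ici t₀))
    (hαmono : ∀ t ∈ Ici t₀, ∀ y z, 0 ≤ y → y ≤ z → α t y ≤ α t z)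
    (hineq : ∀ t ∈ Ici t₀, g' t ≤ -γ t * g t + α t (g t) + β t)
    (hμpos : ∀ t ∈ Ici t₀, 0 < μ t)
    (hμ : ∀ t ∈ Ici t₀, HasDerivAt μ (μ' t) t)
    (hμ'cont : ContinuousOn μ' (Ici t₀))
    (hcomp : ∀ t ∈ Ici t₀, α t (1 / μ t) + β t ≤ (1 / μ t) * (γ t - μ' t / μ t))
    (hinit : μ t₀ * g t₀ < 1) :
    ∀ t ∈ Ici t₀, g t < 1 / μ t :=
  stmt0_general t₀ g g' γ β μ μ' α hgnonneg hg hγ hαmono hineq hμpos hμ hcomp hinit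
end

section
/- If in addition to the hypotheses v(T) ≤ η(T) where η(t) = exp(∫_{t₀}^t γ(s) ds)/μ(t), and α(t,1/μ(t)) + β(t) ≤ (1/μ(t))(γ(t) - μ'(t)/μ(t)) holds for all t in [t₀,T], and v(t) ≤ η(t) on [t₀,T], then v'(t) ≤ η'(t) for all t in [t₀,T]. -/
open Set intervalIntegral

/-!
Writing `E = exp ∫γ`, we have `E' = γ E`, so `v' = E (g' + γ g)` and `η' = E (γ - μ'/μ) / μ`.
Thus `v' ≤ η'` amounts to `g' + γ g ≤ (γ - μ'/μ) / μ`. Now `v ≤ η` means `g ≤ 1/μ`, so by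
monotonicity of `α` the differential inequality gives `g' + γ g ≤ α(t, 1/μ) + β`, and the
comparison condition finishes.
-/

theorem hasDerivAt_exp_integral {γ : ℝ → ℝ} (hγ : Continuous γ) (a t : ℝ) :
    HasDerivAt (fun u => Real.exp (∫ s in a..u, γ s))
      (Real.exp (∫ s in a..t, γ s) * γ t) t :=
  (integral_hasDerivAt_right (hγ.intervalIntegrable _ _)
    hγ.stronglyMeasurable.stronglyMeasurableAtFilter hγ.continuousAt).exp

theorem le_one_div_of_mul_le_div {g E μ : ℝ} (hE : 0 < E) (h : g * E ≤ E / μ) :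
    g ≤ 1 / μ :=
  le_of_mul_le_mul_right (by rwa [one_div_mul_eq_div]) hE

theorem add_mul_le_of_le_one_div {A : ℝ → ℝ} {g g' c b μ μ' : ℝ}
    (hA : ∀ y z, 0 ≤ y → y ≤ z → A y ≤ A z) (hg : 0 ≤ g) (hgμ : g ≤ 1 / μ)
    (hineq : g' ≤ -c * g + A g + b) (hcomp : A (1 / μ) + b ≤ 1 / μ * (c - μ' / μ)) :
    g' + c * g ≤ 1 / μ * (c - μ' / μ) := by
  linarith [hA _ _ hg hgμ]

theorem deriv_mul_le_deriv_div {E g μ : ℝ → ℝ} {g' μ' c t : ℝ}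
    (hE : HasDerivAt E (E t * c) t) (hEpos : 0 < E t) (hg : HasDerivAt g g' t)
    (hμ : HasDerivAt μ μ' t) (hμpos : 0 < μ t) (h : g' + c * g t ≤ 1 / μ t * (c - μ' / μ t)) :
    deriv (fun s => g s * E s) t ≤ deriv (fun s => E s / μ s) t := by
  rw [(hg.fun_mul hE).deriv, (hE.fun_div hμ hμpos.ne').deriv]
  calc g' * E t + g t * (E t * c) = E t * (g' + c * g t) := by ring
    _ ≤ E t * (1 / μ t * (c - μ' / μ t)) := mul_le_mul_of_nonneg_left h hEpos.le
    _ = (E t * c * μ t - E t * μ') / μ t ^ 2 := by field_simp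

theorem stmt4_general
    (t₀ T : ℝ)
    (g g' γ β μ μ' : ℝ → ℝ) (α : ℝ → ℝ → ℝ) (v η : ℝ → ℝ)
    (hgnonneg : ∀ t ∈ Set.Ici t₀, 0 ≤ g t)
    (hg : ∀ t ∈ Set.Ici t₀, HasDerivAt g (g' t) t)
    (hγ : Continuous γ)
    (hαmono : ∀ t ∈ Set.Ici t₀, ∀ y z, 0 ≤ y → y ≤ z → α t y ≤ α t z)
    (hineq : ∀ t ∈ Set.Ici t₀, g' t ≤ -γ t * g t + α t (g t) + β t)
    (hμpos : ∀ t ∈ Set.Ici t₀, 0 < μ t)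
    (hμ : ∀ t ∈ Set.Ici t₀, HasDerivAt μ (μ' t) t)
    (hcomp : ∀ t ∈ Set.Icc t₀ T, α t (1 / μ t) + β t ≤ (1 / μ t) * (γ t - μ' t / μ t))
    (hv : v = fun t => g t * Real.exp (∫ s in t₀..t, γ s))
    (hη : η = fun t => Real.exp (∫ s in t₀..t, γ s) / μ t)
    (hle : ∀ t ∈ Set.Icc t₀ T, v t ≤ η t) :
    ∀ t ∈ Set.Icc t₀ T, deriv v t ≤ deriv η t := by
  subst hv hη
  intro t ht
  have hgμ : g t ≤ 1 / μ t := le_one_div_of_mul_le_div (Real.exp_pos _) (hle t ht)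
  exact deriv_mul_le_deriv_div (hasDerivAt_exp_integral hγ t₀ t) (Real.exp_pos _)
    (hg t ht.1) (hμ t ht.1) (hμpos t ht.1)
    (add_mul_le_of_le_one_div (hαmono t ht.1) (hgnonneg t ht.1) hgμ (hineq t ht.1) (hcomp t ht))

/-- Claim 1: if `v ≤ η` on `[t₀, T]`, where `v = g e^{∫γ}` and `η = e^{∫γ}/μ`,
and the comparison condition holds, then `v' ≤ η'` on `[t₀, T]`. -/
theorem stmt4
    (t₀ T : ℝ) (hT : t₀ < T)
    (g g' γ β μ μ' : ℝ → ℝ) (α : ℝ → ℝ → ℝ) (v η : ℝ → ℝ)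
    (hgnonneg : ∀ t ∈ Set.Ici t₀, 0 ≤ g t)
    (hg : ∀ t ∈ Set.Ici t₀, HasDerivAt g (g' t) t)
    (hβ : ContinuousOn β (Set.Ici t₀))
    (hγ : Continuous γ)
    (hαnonneg : ∀ t ∈ Set.Ici t₀, ∀ y, 0 ≤ y → 0 ≤ α t y)
    (hαmono : ∀ t ∈ Set.Ici t₀, ∀ y z, 0 ≤ y → y ≤ z → α t y ≤ α t z)
    (hineq : ∀ t ∈ Set.Ici t₀, g' t ≤ -γ t * g t + α t (g t) + β t)
    (hμpos : ∀ t ∈ Set.Ici t₀, 0 < μ t)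
    (hμ : ∀ t ∈ Set.Ici t₀, HasDerivAt μ (μ' t) t)
    (hcomp : ∀ t ∈ Set.Icc t₀ T, α t (1 / μ t) + β t ≤ (1 / μ t) * (γ t - μ' t / μ t))
    (hv : v = fun t => g t * Real.exp (∫ s in t₀..t, γ s))
    (hη : η = fun t => Real.exp (∫ s in t₀..t, γ s) / μ t)
    (hle : ∀ t ∈ Set.Icc t₀ T, v t ≤ η t) :
    ∀ t ∈ Set.Icc t₀ T, deriv v t ≤ deriv η t :=
  stmt4_general t₀ T g g' γ β μ μ' α v η hgnonneg hg hγ hαmono hineq hμpos hμ hcomp hv hη hle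
end

section
/- Let (g_n), (β_n) be nonnegative real sequences, (h_n), (γ_n) positive with 0 < h_n γ_n < 1, and suppose g_{n+1} ≤ g_n(1 - h_n γ_n) + h_n α(n, g_n) + h_n β_n for all n ≥ 0, where α(n,y) ≥ 0 is nondecreasing in y. If there is a positive sequence (μ_n) with α(n, 1/μ_n) + β_n ≤ (1/μ_n)(γ_n - (μ_{n+1} - μ_n)/(μ_n h_n)) for all n and g_0 ≤ 1/μ_0, then 0 ≤ g_n ≤ 1/μ_n for all n ≥ 0. -/
/-!
The bound `1/μ_n` is propagated by induction. If `g_n ≤ 1/μ_n`, monotonicity of `α` in its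
second argument and the comparison condition bound the right-hand side of the recursion by
`1/μ_n - (μ_{n+1} - μ_n)/μ_n²`: the tangent line of the convex function `t ↦ 1/t` at `μ_n`,
evaluated at `μ_{n+1}`, hence below `1/μ_{n+1}`.
-/

theorem one_div_sub_div_sq_le_one_div {μ μ' : ℝ} (hμ : 0 < μ) (hμ' : 0 < μ') :
    1 / μ - (μ' - μ) / μ ^ 2 ≤ 1 / μ' := by
  rw [div_sub_div _ _ hμ.ne' (by positivity), div_le_div_iff₀ (by positivity) hμ']
  nlinarith [sq_nonneg (μ - μ'), mul_pos hμ hμ']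

theorem add_mul_le_one_div_of_comparison {x a h γ μ μ' : ℝ} (hh : 0 < h) (hhγ : h * γ ≤ 1)
    (hμ : 0 < μ) (hμ' : 0 < μ') (hx : x ≤ 1 / μ)
    (ha : a ≤ 1 / μ * (γ - (μ' - μ) / (μ * h))) :
    x * (1 - h * γ) + h * a ≤ 1 / μ' :=
  calc x * (1 - h * γ) + h * a
      ≤ 1 / μ * (1 - h * γ) + h * (1 / μ * (γ - (μ' - μ) / (μ * h))) := by
        gcongr
    _ = 1 / μ - (μ' - μ) / μ ^ 2 := by
        field_simp
        ring
    _ ≤ 1 / μ' := one_div_sub_div_sq_le_one_div hμ hμ'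

theorem stmt6_general
    (g β h γ μ : ℕ → ℝ) (α : ℕ → ℝ → ℝ)
    (hgnonneg : ∀ n, 0 ≤ g n)
    (hh : ∀ n, 0 < h n)
    (hhγ : ∀ n, 0 < h n * γ n ∧ h n * γ n < 1)
    (hαmono : ∀ n, ∀ y z, 0 ≤ y → y ≤ z → α n y ≤ α n z)
    (hineq : ∀ n, g (n + 1) ≤ g n * (1 - h n * γ n) + h n * α n (g n) + h n * β n)
    (hμpos : ∀ n, 0 < μ n)
    (hcomp : ∀ n, α n (1 / μ n) + β n ≤ (1 / μ n) * (γ n - (μ (n + 1) - μ n) / (μ n * h n)))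
    (hinit : g 0 ≤ 1 / μ 0) :
    ∀ n, 0 ≤ g n ∧ g n ≤ 1 / μ n := by
  intro n
  induction n with
  | zero => exact ⟨hgnonneg 0, hinit⟩
  | succ n ih =>
    refine ⟨hgnonneg (n + 1), (hineq n).trans ?_⟩
    have hα : α n (g n) ≤ α n (1 / μ n) := hαmono n _ _ (hgnonneg n) ih.2
    rw [add_assoc, ← mul_add]
    exact add_mul_le_one_div_of_comparison (hh n) (hhγ n).2.le (hμpos n) (hμpos (n + 1)) ih.2
      ((add_le_add_left hα _).trans (hcomp n))

/-- Theorem 3 (discrete inequality): `g_{n+1} ≤ g_n(1 - h_n γ_n) + h_n α(n, g_n) + h_n β_n`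
with the discrete comparison condition implies `0 ≤ g_n ≤ 1/μ_n` for all `n`. -/
theorem stmt6
    (g β h γ μ : ℕ → ℝ) (α : ℕ → ℝ → ℝ)
    (hgnonneg : ∀ n, 0 ≤ g n)
    (hβnonneg : ∀ n, 0 ≤ β n)
    (hh : ∀ n, 0 < h n)
    (hhγ : ∀ n, 0 < h n * γ n ∧ h n * γ n < 1)
    (hαnonneg : ∀ n, ∀ y, 0 ≤ y → 0 ≤ α n y)
    (hαmono : ∀ n, ∀ y z, 0 ≤ y → y ≤ z → α n y ≤ α n z)
    (hineq : ∀ n, g (n + 1) ≤ g n * (1 - h n * γ n) + h n * α n (g n) + h n * β n)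
    (hμpos : ∀ n, 0 < μ n)
    (hcomp : ∀ n, α n (1 / μ n) + β n ≤ (1 / μ n) * (γ n - (μ (n + 1) - μ n) / (μ n * h n)))
    (hinit : g 0 ≤ 1 / μ 0) :
    ∀ n, 0 ≤ g n ∧ g n ≤ 1 / μ n :=
  stmt6_general g β h γ μ α hgnonneg hh hhγ hαmono hineq hμpos hcomp hinit
end

section
/- Under the hypotheses of the discrete inequality theorem (g_{n+1} ≤ g_n(1 - h_nγ_n) + h_nα(n,g_n) + h_nβ_n with the comparison condition α(n,1/μ_n) + β_n ≤ (1/μ_n)(γ_n - (μ_{n+1}-μ_n)/(μ_n h_n)) and g_0 ≤ 1/μ_0), if μ_n → ∞ then g_n → 0 as n → ∞. -/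
/-! The comparison condition is exactly what makes `1 / μ_n` a supersolution of the recursion:
since `t ↦ 1 / t` lies above its tangent lines, `1/μ_n - (μ_{n+1} - μ_n)/μ_n² ≤ 1/μ_{n+1}`.
By induction `g_n ≤ 1 / μ_n`, and `1 / μ_n → 0`. -/

open Filter

lemma one_div_sub_div_sq_le_one_div_s7 {a b : ℝ} (ha : 0 < a) (hb : 0 < b) :
    1 / a - (b - a) / (a * a) ≤ 1 / b := by
  have key : 1 / b - (1 / a - (b - a) / (a * a)) = (b - a) ^ 2 / (a * a * b) := by
    field_simp
    ring
  have : 0 ≤ (b - a) ^ 2 / (a * a * b) := by positivity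
  linarith

lemma le_one_div_succ_of_le_one_div {x x' h γ β μ μ' : ℝ} {α : ℝ → ℝ}
    (hα : MonotoneOn α (Set.Ici 0)) (hx : 0 ≤ x) (hh : 0 < h) (hhγ : h * γ ≤ 1)
    (hμ : 0 < μ) (hμ' : 0 < μ')
    (hrec : x' ≤ x * (1 - h * γ) + h * α x + h * β)
    (hcomp : α (1 / μ) + β ≤ 1 / μ * (γ - (μ' - μ) / (μ * h)))
    (hxμ : x ≤ 1 / μ) : x' ≤ 1 / μ' := by
  have hαx : α x ≤ α (1 / μ) := hα hx (hx.trans hxμ) hxμ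
  calc x' ≤ 1 / μ * (1 - h * γ) + h * (α (1 / μ) + β) := by
        nlinarith [mul_le_mul_of_nonneg_right hxμ (sub_nonneg.2 hhγ)]
    _ ≤ 1 / μ * (1 - h * γ) + h * (1 / μ * (γ - (μ' - μ) / (μ * h))) := by gcongr
    _ = 1 / μ - (μ' - μ) / (μ * μ) := by field_simp; ring
    _ ≤ 1 / μ' := one_div_sub_div_sq_le_one_div_s7 hμ hμ'

lemma le_one_div_of_comparison (g β h γ μ : ℕ → ℝ) (α : ℕ → ℝ → ℝ)
    (hgnonneg : ∀ n, 0 ≤ g n) (hh : ∀ n, 0 < h n) (hhγ : ∀ n, h n * γ n ≤ 1)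
    (hαmono : ∀ n, MonotoneOn (α n) (Set.Ici 0))
    (hineq : ∀ n, g (n + 1) ≤ g n * (1 - h n * γ n) + h n * α n (g n) + h n * β n)
    (hμpos : ∀ n, 0 < μ n)
    (hcomp : ∀ n, α n (1 / μ n) + β n ≤ (1 / μ n) * (γ n - (μ (n + 1) - μ n) / (μ n * h n)))
    (hinit : g 0 ≤ 1 / μ 0) (n : ℕ) :
    g n ≤ 1 / μ n := by
  induction n with
  | zero => exact hinit
  | succ n ih =>
    exact le_one_div_succ_of_le_one_div (hαmono n) (hgnonneg n) (hh n) (hhγ n) (hμpos n)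
      (hμpos (n + 1)) (hineq n) (hcomp n) ih

theorem stmt7_general
    (g β h γ μ : ℕ → ℝ) (α : ℕ → ℝ → ℝ)
    (hgnonneg : ∀ n, 0 ≤ g n)
    (hh : ∀ n, 0 < h n)
    (hhγ : ∀ n, 0 < h n * γ n ∧ h n * γ n < 1)
    (hαmono : ∀ n, ∀ y z, 0 ≤ y → y ≤ z → α n y ≤ α n z)
    (hineq : ∀ n, g (n + 1) ≤ g n * (1 - h n * γ n) + h n * α n (g n) + h n * β n)
    (hμpos : ∀ n, 0 < μ n)
    (hcomp : ∀ n, α n (1 / μ n) + β n ≤ (1 / μ n) * (γ n - (μ (n + 1) - μ n) / (μ n * h n)))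
    (hinit : g 0 ≤ 1 / μ 0)
    (hμtop : Tendsto μ atTop atTop) :
    Tendsto g atTop (nhds 0) := by
  have hbound := le_one_div_of_comparison g β h γ μ α hgnonneg hh (fun n => (hhγ n).2.le)
    (fun n _ hy _ _ hyz => hαmono n _ _ hy hyz) hineq hμpos hcomp hinit
  have hlim : Tendsto (fun n => 1 / μ n) atTop (nhds 0) := by
    simpa only [one_div, Pi.inv_def] using hμtop.inv_tendsto_atTop
  exact squeeze_zero hgnonneg hbound hlim

/-- Discrete theorem, limit version: if in addition `μ_n → ∞` then `g_n → 0`. -/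
theorem stmt7
    (g β h γ μ : ℕ → ℝ) (α : ℕ → ℝ → ℝ)
    (hgnonneg : ∀ n, 0 ≤ g n)
    (hβnonneg : ∀ n, 0 ≤ β n)
    (hh : ∀ n, 0 < h n)
    (hhγ : ∀ n, 0 < h n * γ n ∧ h n * γ n < 1)
    (hαnonneg : ∀ n, ∀ y, 0 ≤ y → 0 ≤ α n y)
    (hαmono : ∀ n, ∀ y z, 0 ≤ y → y ≤ z → α n y ≤ α n z)
    (hineq : ∀ n, g (n + 1) ≤ g n * (1 - h n * γ n) + h n * α n (g n) + h n * β n)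
    (hμpos : ∀ n, 0 < μ n)
    (hcomp : ∀ n, α n (1 / μ n) + β n ≤ (1 / μ n) * (γ n - (μ (n + 1) - μ n) / (μ n * h n)))
    (hinit : g 0 ≤ 1 / μ 0)
    (hμtop : Tendsto μ atTop atTop) :
    Tendsto g atTop (nhds 0) :=
  stmt7_general g β h γ μ α hgnonneg hh hhγ hαmono hineq hμpos hcomp hinit hμtop
end

section
/- Let (g_n), (β_n), (γ_n) be nonnegative sequences with 0 < γ_n < 1 and g_{n+1} ≤ g_n(1 - γ_n) + α(n, g_n) + β_n for all n ≥ 0, where α(n,y) ≥ 0 is nondecreasing in y. If there is a positive sequence (μ_n) with g_0 ≤ 1/μ_0 and α(n, 1/μ_n) + β_n ≤ (1/μ_n)(γ_n - (μ_{n+1} - μ_n)/μ_n) for all n ≥ 0, then g_n ≤ 1/μ_n for all n ≥ 0. -/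
/-- Theorem 4 (discrete theorem with `h_n = 1`). -/
theorem stmt8
    (g β γ μ : ℕ → ℝ) (α : ℕ → ℝ → ℝ)
    (hgnonneg : ∀ n, 0 ≤ g n)
    (hβnonneg : ∀ n, 0 ≤ β n)
    (hγ : ∀ n, 0 < γ n ∧ γ n < 1)
    (hαnonneg : ∀ n, ∀ y, 0 ≤ y → 0 ≤ α n y)
    (hαmono : ∀ n, ∀ y z, 0 ≤ y → y ≤ z → α n y ≤ α n z)
    (hineq : ∀ n, g (n + 1) ≤ g n * (1 - γ n) + α n (g n) + β n)
    (hμpos : ∀ n, 0 < μ n)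
    (hinit : g 0 ≤ 1 / μ 0)
    (hcomp : ∀ n, α n (1 / μ n) + β n ≤ (1 / μ n) * (γ n - (μ (n + 1) - μ n) / μ n)) :
    ∀ n, g n ≤ 1 / μ n := by
  intro n
  induction n with
  | zero => exact hinit
  | succ n ih =>
    have hm := hμpos n
    have hM := hμpos (n + 1)
    have h1 : g (n + 1) ≤ (1 / μ n) * (1 - γ n) + α n (1 / μ n) + β n := by
      have hγ1 : 0 ≤ 1 - γ n := le_of_lt (by linarith [(hγ n).2])
      have := hαmono n (g n) (1 / μ n) (hgnonneg n) ih
      nlinarith [hineq n]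
    have h2 : (1 / μ n) * (1 - γ n) + α n (1 / μ n) + β n
        ≤ (1 / μ n) * (1 - (μ (n + 1) - μ n) / μ n) := by
      have := hcomp n
      have hpos : 0 < 1 / μ n := by positivity
      nlinarith
    have h3 : (1 / μ n) * (1 - (μ (n + 1) - μ n) / μ n) ≤ 1 / μ (n + 1) := by
      have e : 1 / μ n * (1 - (μ (n + 1) - μ n) / μ n)
          = (2 * μ n - μ (n + 1)) / (μ n * μ n) := by field_simp; ring
      rw [e, div_le_div_iff₀ (by positivity) hM]
      nlinarith [sq_nonneg (μ n - μ (n + 1))]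
    linarith
end

section
/- Let g : [0,∞) → ℝ be nonnegative and differentiable with ġ(t) ≤ -2c(1+t)^{-b} g(t) + 2(1+t)^{-m} g(t)^{1+p/2} + 2(1+t)^{-q} g(t)^{1/2}. With the choices b = 1, q = 3/2, m = 1, c = 4, p ≥ 1, and μ(t) = 4(1+t): if g(0) < 1/4 then g(t) ≤ 1/(4(1+t)) for all t ≥ 0, and hence g(t) → 0. -/
/-!
`B(t) = 1/(4(1+t))` is a barrier: if `g` ever touched `B`, then at the contact point, with
`s = 1+t`, the three terms of the differential inequality are at most `-2/s²`, `1/(2s²)` and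
`1/s²` (the middle one because `g ≤ 1` and `1 + p/2 ≥ 1`), so `ġ ≤ -1/(2s²) < -1/(4s²) = Ḃ`.
Hence `g` can never cross `B`, and `g → 0` by squeezing between `0` and `B`.
-/

open Set Filter Topology

theorem le_on_Ici_of_hasDerivAt_lt_of_eq {f f' B B' : ℝ → ℝ} {a : ℝ}
    (hf : ∀ t ∈ Ici a, HasDerivAt f (f' t) t) (hB : ∀ t ∈ Ici a, HasDerivAt B (B' t) t)
    (ha : f a ≤ B a) (hcontact : ∀ t ∈ Ici a, f t = B t → f' t < B' t) :
    ∀ t ∈ Ici a, f t ≤ B t := fun _ ht =>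
  image_le_of_deriv_right_lt_deriv_boundary'
    (fun x hx => (hf x hx.1).continuousAt.continuousWithinAt)
    (fun x hx => (hf x hx.1).hasDerivWithinAt) ha
    (fun x hx => (hB x hx.1).continuousAt.continuousWithinAt)
    (fun x hx => (hB x hx.1).hasDerivWithinAt)
    (fun x hx => hcontact x hx.1) (right_mem_Icc.2 ht)

theorem hasDerivAt_one_div_four_mul_one_add {x : ℝ} (hx : 1 + x ≠ 0) :
    HasDerivAt (fun t => 1 / (4 * (1 + t))) (-1 / (4 * (1 + x) ^ 2)) x := by
  have h : HasDerivAt (fun t : ℝ => 4 * (1 + t)) 4 x := by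
    simpa using ((hasDerivAt_id x).const_add 1).const_mul (4 : ℝ)
  refine ((hasDerivAt_const x (1 : ℝ)).div h (by simpa using hx)).congr_deriv ?_
  field_simp
  ring

theorem tendsto_one_div_four_mul_one_add_atTop :
    Tendsto (fun t : ℝ => 1 / (4 * (1 + t))) atTop (𝓝 0) :=
  tendsto_const_nhds.div_atTop
    ((tendsto_atTop_add_const_left atTop 1 tendsto_id).const_mul_atTop (by norm_num))

theorem two_div_rpow_three_halves_mul_sqrt_one_div_four_mul {s : ℝ} (hs : 0 < s) :
    2 / s ^ ((3 : ℝ) / 2) * (1 / (4 * s)) ^ ((1 : ℝ) / 2) = 1 / s ^ 2 := by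
  have hsqrt : (1 / (4 * s)) ^ ((1 : ℝ) / 2) = 1 / (2 * s ^ ((1 : ℝ) / 2)) := by
    rw [Real.div_rpow zero_le_one (by positivity), Real.one_rpow,
      Real.mul_rpow (by norm_num) hs.le, ← Real.sqrt_eq_rpow 4,
      show (4 : ℝ) = 2 ^ 2 by norm_num, Real.sqrt_sq zero_le_two]
  have hpow : s ^ ((3 : ℝ) / 2) * s ^ ((1 : ℝ) / 2) = s ^ 2 := by
    rw [← Real.rpow_add hs]
    norm_num
  have hpos : 0 < s ^ ((1 : ℝ) / 2) := Real.rpow_pos_of_pos hs _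
  rw [hsqrt, ← hpow]
  field_simp

theorem rhs_at_barrier_lt_deriv_barrier {p s : ℝ} (hp : 0 ≤ p) (hs : 1 ≤ 4 * s) :
    -2 * 4 / s * (1 / (4 * s)) + 2 / s * (1 / (4 * s)) ^ (1 + p / 2)
      + 2 / s ^ ((3 : ℝ) / 2) * (1 / (4 * s)) ^ ((1 : ℝ) / 2) < -1 / (4 * s ^ 2) := by
  have hs0 : 0 < s := by linarith
  have hsuper : (1 / (4 * s)) ^ (1 + p / 2) ≤ 1 / (4 * s) := by
    simpa using Real.rpow_le_rpow_of_exponent_ge (by positivity)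
      ((div_le_one (by positivity)).2 hs) (by linarith : (1 : ℝ) ≤ 1 + p / 2)
  have hmid : 2 / s * (1 / (4 * s)) ^ (1 + p / 2) ≤ 2 / s * (1 / (4 * s)) :=
    mul_le_mul_of_nonneg_left hsuper (by positivity)
  rw [two_div_rpow_three_halves_mul_sqrt_one_div_four_mul hs0]
  have hgap : -2 * 4 / s * (1 / (4 * s)) + 2 / s * (1 / (4 * s)) + 1 / s ^ 2
      = -1 / (4 * s ^ 2) - 1 / (4 * s ^ 2) := by
    field_simp
    ring
  have : 0 < 1 / (4 * s ^ 2) := by positivity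
  linarith

/-- Example 1: with `b = 1`, `q = 3/2`, `m = 1`, `c = 4`, `p ≥ 1` and `μ(t) = 4(1+t)`,
if `g(0) < 1/4` then `g(t) ≤ 1/(4(1+t))` for all `t ≥ 0` and `g(t) → 0`. -/
theorem stmt11
    (p : ℝ) (hp : 1 ≤ p)
    (g g' : ℝ → ℝ)
    (hgnonneg : ∀ t ∈ Ici (0:ℝ), 0 ≤ g t)
    (hg : ∀ t ∈ Ici (0:ℝ), HasDerivAt g (g' t) t)
    (hineq : ∀ t ∈ Ici (0:ℝ), g' t ≤
      -2 * 4 / (1 + t) * g t + 2 / (1 + t) * g t ^ (1 + p / 2)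
        + 2 / (1 + t) ^ ((3:ℝ)/2) * g t ^ ((1:ℝ)/2))
    (hinit : g 0 < 1 / 4) :
    (∀ t ∈ Ici (0:ℝ), g t ≤ 1 / (4 * (1 + t))) ∧ Tendsto g atTop (nhds 0) := by
  have hbarrier : ∀ t ∈ Ici (0 : ℝ),
      HasDerivAt (fun t => 1 / (4 * (1 + t))) (-1 / (4 * (1 + t) ^ 2)) t := fun t ht =>
    hasDerivAt_one_div_four_mul_one_add (by linarith [mem_Ici.1 ht])
  have hbound : ∀ t ∈ Ici (0:ℝ), g t ≤ 1 / (4 * (1 + t)) := by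
    refine le_on_Ici_of_hasDerivAt_lt_of_eq hg hbarrier (by norm_num; linarith) ?_
    intro t ht hcontact
    refine (hineq t ht).trans_lt ?_
    rw [hcontact]
    exact rhs_at_barrier_lt_deriv_barrier (by linarith) (by linarith [mem_Ici.1 ht])
  refine ⟨hbound, squeeze_zero' ?_ ?_ tendsto_one_div_four_mul_one_add_atTop⟩
  · filter_upwards [eventually_ge_atTop (0 : ℝ)] with t ht using hgnonneg t ht
  · filter_upwards [eventually_ge_atTop (0 : ℝ)] with t ht using hbound t ht
end

section
/- Let g : [0,∞) → ℝ be nonnegative and differentiable satisfying ġ(t) ≤ α(t, g(t)) + β(t), where α, β satisfy the Example 2 bounds α(t,y) ≤ θC|y|^p·bλ/((λ+c)(1+t)^{1+b}) and β(t) ≤ (1-θ)bλ/((c+λ)²(1+t)^{1+b}) with C as in Example 2. If g(0) < 1/(c+λ), then g(t) ≤ 1/(c + λ(1+t)^{-b}) < 1/c for all t > 0. -/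
/-!
The barrier `B(t) = 1/(c + λ(1+t)^{-b})` solves `B' = bλ(1+t)^{-1-b} B²`, starts at `1/(c+λ)`
and stays below `1/c`. At a contact point `t > 0` of `g` with `B` we have
`1/(c+λ) < B(t) ≤ 1/c`, where `C B^{p-2} ≤ λ + c`; hence the bound on `α + β` is the
`θ`-convex combination of two numbers `≤ B²` and `< B²` (times `bλ(1+t)^{-1-b}`), so `g' < B'`
there and `g` can never cross `B`.
-/

open Set

noncomputable def barrier (c l b t : ℝ) : ℝ := 1 / (c + l * (1 + t) ^ (-b))

section barrier

variable {c l b t : ℝ}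

lemma barrier_denom_pos (hc : 0 < c) (hl : 0 < l) (ht : -1 < t) :
    0 < c + l * (1 + t) ^ (-b) := by
  have := Real.rpow_pos_of_pos (by linarith : (0:ℝ) < 1 + t) (-b)
  positivity

lemma barrier_zero : barrier c l b 0 = 1 / (c + l) := by
  simp [barrier]

lemma barrier_lt_inv (hc : 0 < c) (hl : 0 < l) (ht : -1 < t) : barrier c l b t < 1 / c := by
  have := Real.rpow_pos_of_pos (by linarith : (0:ℝ) < 1 + t) (-b)
  unfold barrier
  gcongr
  nlinarith

lemma inv_lt_barrier (hc : 0 < c) (hl : 0 < l) (hb : 0 < b) (ht : 0 < t) :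
    1 / (c + l) < barrier c l b t := by
  have : (1 + t) ^ (-b) < 1 := Real.rpow_lt_one_of_one_lt_of_neg (by linarith) (by linarith)
  exact one_div_lt_one_div_of_lt (barrier_denom_pos hc hl (by linarith)) (by nlinarith)

lemma hasDerivAt_barrier (hc : 0 < c) (hl : 0 < l) (ht : -1 < t) :
    HasDerivAt (barrier c l b) (b * l / (1 + t) ^ (1 + b) * barrier c l b t ^ 2) t := by
  have h1t : 0 < 1 + t := by linarith
  have hden : HasDerivAt (fun s => c + l * (1 + s) ^ (-b))
      (l * (1 * (-b) * (1 + t) ^ (-b - 1))) t :=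
    ((((hasDerivAt_id t).const_add 1).rpow_const (Or.inl h1t.ne')).const_mul l).const_add c
  have hpow : (1 + t) ^ (-b - 1) = 1 / (1 + t) ^ (1 + b) := by
    rw [show -b - 1 = -(1 + b) by ring, Real.rpow_neg h1t.le, one_div]
  have hfun : barrier c l b = fun s => (c + l * (1 + s) ^ (-b))⁻¹ := funext fun _ => one_div _
  rw [hfun]
  refine (hden.inv (barrier_denom_pos hc hl ht).ne').congr_deriv ?_
  rw [hpow]
  field_simp

end barrier

lemma le_of_hasDerivAt_lt_at_contact {f f' B B' : ℝ → ℝ} {a : ℝ}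
    (hf : ∀ t ≥ a, HasDerivAt f (f' t) t) (hB : ∀ t ≥ a, HasDerivAt B (B' t) t)
    (ha : f a < B a) (hcontact : ∀ t > a, f t = B t → f' t < B' t) :
    ∀ t ≥ a, f t ≤ B t := by
  intro T hT
  refine image_le_of_deriv_right_lt_deriv_boundary' (f := f) (B := B)
    (fun t ht => (hf t ht.1).continuousAt.continuousWithinAt)
    (fun t ht => (hf t ht.1).hasDerivWithinAt) ha.le
    (fun t ht => (hB t ht.1).continuousAt.continuousWithinAt)
    (fun t ht => (hB t ht.1).hasDerivWithinAt) ?_ ⟨hT, le_rfl⟩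
  rintro t ⟨hat, -⟩ hft
  rcases hat.eq_or_lt with rfl | hat
  · exact absurd hft ha.ne
  · exact hcontact t hat hft

lemma mul_rpow_sub_two_le {c l p C y : ℝ} (hc : 0 < c) (hl : 0 < l)
    (hC : C = if 1 < p then c ^ (p - 1) else (l + c) ^ (p - 1))
    (hy₁ : (l + c)⁻¹ ≤ y) (hy₂ : y ≤ c⁻¹) :
    C * y ^ (p - 2) ≤ l + c := by
  have hlc : 0 < l + c := by linarith
  have hy : 0 < y := (inv_pos.2 hlc).trans_le hy₁
  rcases le_or_gt 2 p with h2p | h2p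
  · rw [hC, if_pos (by linarith)]
    calc c ^ (p - 1) * y ^ (p - 2) ≤ c ^ (p - 1) * c⁻¹ ^ (p - 2) := by
          gcongr
      _ = c := by
          rw [Real.inv_rpow hc.le, ← Real.rpow_neg hc.le, ← Real.rpow_add hc]
          norm_num
      _ ≤ l + c := by linarith
  · have hC' : C ≤ (l + c) ^ (p - 1) := by
      rw [hC]
      split_ifs with h1p
      · exact Real.rpow_le_rpow hc.le (by linarith) (by linarith)
      · exact le_rfl
    calc C * y ^ (p - 2) ≤ (l + c) ^ (p - 1) * (l + c)⁻¹ ^ (p - 2) := by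
          refine mul_le_mul hC' ?_ (by positivity) (by positivity)
          exact Real.rpow_le_rpow_of_nonpos (by positivity) hy₁ (by linarith)
      _ = l + c := by
          rw [Real.inv_rpow hlc.le, ← Real.rpow_neg hlc.le, ← Real.rpow_add hlc]
          norm_num

lemma convex_combination_lt_sq {c l p C θ y : ℝ} (hc : 0 < c) (hl : 0 < l)
    (hC : C = if 1 < p then c ^ (p - 1) else (l + c) ^ (p - 1)) (hθ : θ ∈ Ioo (0 : ℝ) 1)
    (hy₁ : (c + l)⁻¹ < y) (hy₂ : y ≤ c⁻¹) :
    θ * (C * y ^ p / (l + c)) + (1 - θ) / (c + l) ^ 2 < y ^ 2 := by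
  have hlc : 0 < l + c := by linarith
  have hy : 0 < y := (inv_pos.2 (by linarith)).trans hy₁
  have hCy : C * y ^ p / (l + c) ≤ y ^ 2 := by
    rw [div_le_iff₀ hlc, show y ^ p = y ^ (p - 2) * y ^ 2 by
      rw [← Real.rpow_natCast, ← Real.rpow_add hy]; norm_num]
    have := mul_rpow_sub_two_le hc hl hC (by rw [add_comm]; exact hy₁.le) hy₂
    nlinarith [sq_nonneg y]
  have hsq : 1 / (c + l) ^ 2 < y ^ 2 := by
    rw [one_div, ← inv_pow]
    exact pow_lt_pow_left₀ hy₁ (by positivity) two_ne_zero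
  obtain ⟨hθ₀, hθ₁⟩ := hθ
  calc θ * (C * y ^ p / (l + c)) + (1 - θ) / (c + l) ^ 2
      = θ * (C * y ^ p / (l + c)) + (1 - θ) * (1 / (c + l) ^ 2) := by ring
    _ < θ * y ^ 2 + (1 - θ) * y ^ 2 :=
        add_lt_add_of_le_of_lt (mul_le_mul_of_nonneg_left hCy hθ₀.le)
          (mul_lt_mul_of_pos_left hsq (by linarith))
    _ = y ^ 2 := by ring

lemma rhs_lt_deriv_barrier {c l b p C θ t : ℝ} (hc : 0 < c) (hl : 0 < l) (hb : 0 < b)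
    (hC : C = if 1 < p then c ^ (p - 1) else (l + c) ^ (p - 1)) (hθ : θ ∈ Ioo (0 : ℝ) 1)
    (ht : 0 < t) :
    θ * C * |barrier c l b t| ^ p * (b * l / ((l + c) * (1 + t) ^ (1 + b))) +
        (1 - θ) * (b * l / ((c + l) ^ 2 * (1 + t) ^ (1 + b))) <
      b * l / (1 + t) ^ (1 + b) * barrier c l b t ^ 2 := by
  have hy₁ : (c + l)⁻¹ < barrier c l b t := by
    simpa only [one_div] using inv_lt_barrier hc hl hb ht
  have hy₂ : barrier c l b t ≤ c⁻¹ := by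
    simpa only [one_div] using (barrier_lt_inv (b := b) hc hl (by linarith : -1 < t)).le
  have hy : 0 < barrier c l b t := (inv_pos.2 (by linarith)).trans hy₁
  have hD : 0 < (1 + t) ^ (1 + b) := Real.rpow_pos_of_pos (by linarith) _
  have hlc : 0 < l + c := by linarith
  calc θ * C * |barrier c l b t| ^ p * (b * l / ((l + c) * (1 + t) ^ (1 + b))) +
        (1 - θ) * (b * l / ((c + l) ^ 2 * (1 + t) ^ (1 + b)))
      = (θ * (C * barrier c l b t ^ p / (l + c)) + (1 - θ) / (c + l) ^ 2) *
          (b * l / (1 + t) ^ (1 + b)) := by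
        rw [abs_of_pos hy]
        field_simp
    _ < barrier c l b t ^ 2 * (b * l / (1 + t) ^ (1 + b)) :=
        mul_lt_mul_of_pos_right (convex_combination_lt_sq hc hl hC hθ hy₁ hy₂) (by positivity)
    _ = b * l / (1 + t) ^ (1 + b) * barrier c l b t ^ 2 := mul_comm _ _

theorem stmt15_general
    (c l b θ p : ℝ) (hc : 0 < c) (hl : 0 < l) (hb : 0 < b)
    (hθ : θ ∈ Set.Ioo (0:ℝ) 1)
    (C : ℝ) (hC : C = if 1 < p then c ^ (p - 1) else (l + c) ^ (p - 1))
    (α : ℝ → ℝ → ℝ) (β : ℝ → ℝ)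
    (hα : ∀ t ≥ (0:ℝ), ∀ y : ℝ,
      α t y ≤ θ * C * |y| ^ p * (b * l / ((l + c) * (1 + t) ^ (1 + b))))
    (hβ : ∀ t ≥ (0:ℝ), β t ≤ (1 - θ) * (b * l / ((c + l) ^ 2 * (1 + t) ^ (1 + b))))
    (g g' : ℝ → ℝ)
    (hg : ∀ t ≥ (0:ℝ), HasDerivAt g (g' t) t)
    (hineq : ∀ t ≥ (0:ℝ), g' t ≤ α t (g t) + β t)
    (hinit : g 0 < 1 / (c + l)) :
    ∀ t > (0:ℝ), g t ≤ 1 / (c + l * (1 + t) ^ (-b)) ∧ 1 / (c + l * (1 + t) ^ (-b)) < 1 / c := by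
  have hcontact : ∀ t > (0:ℝ), g t = barrier c l b t →
      g' t < b * l / (1 + t) ^ (1 + b) * barrier c l b t ^ 2 := by
    intro t ht hgt
    calc g' t ≤ α t (g t) + β t := hineq t ht.le
      _ ≤ _ := add_le_add (hα t ht.le (g t)) (hβ t ht.le)
      _ < _ := hgt ▸ rhs_lt_deriv_barrier hc hl hb hC hθ ht
  have hle := le_of_hasDerivAt_lt_at_contact hg
    (fun t ht => hasDerivAt_barrier hc hl (by linarith)) (barrier_zero ▸ hinit) hcontact
  exact fun t ht => ⟨hle t ht.le, barrier_lt_inv hc hl (by linarith)⟩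

/-- Example 2 conclusion: `g(t) ≤ 1/(c + λ(1+t)^{-b}) < 1/c` for all `t > 0`. -/
theorem stmt15
    (c l b θ p : ℝ) (hc : 0 < c) (hl : 0 < l) (hb : 0 < b)
    (hθ : θ ∈ Set.Ioo (0:ℝ) 1) (hp : 0 < p)
    (C : ℝ) (hC : C = if 1 < p then c ^ (p - 1) else (l + c) ^ (p - 1))
    (α : ℝ → ℝ → ℝ) (β : ℝ → ℝ)
    (hαnonneg : ∀ t ≥ (0:ℝ), ∀ y, 0 ≤ y → 0 ≤ α t y)
    (hαmono : ∀ t ≥ (0:ℝ), ∀ y z, 0 ≤ y → y ≤ z → α t y ≤ α t z)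
    (hαcont : ∀ y, 0 ≤ y → ContinuousOn (fun t => α t y) (Ici (0:ℝ)))
    (hβnonneg : ∀ t ≥ (0:ℝ), 0 ≤ β t)
    (hβcont : ContinuousOn β (Ici (0:ℝ)))
    (hα : ∀ t ≥ (0:ℝ), ∀ y : ℝ,
      α t y ≤ θ * C * |y| ^ p * (b * l / ((l + c) * (1 + t) ^ (1 + b))))
    (hβ : ∀ t ≥ (0:ℝ), β t ≤ (1 - θ) * (b * l / ((c + l) ^ 2 * (1 + t) ^ (1 + b))))
    (g g' : ℝ → ℝ)
    (hgnonneg : ∀ t ≥ (0:ℝ), 0 ≤ g t)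
    (hg : ∀ t ≥ (0:ℝ), HasDerivAt g (g' t) t)
    (hineq : ∀ t ≥ (0:ℝ), g' t ≤ α t (g t) + β t)
    (hinit : g 0 < 1 / (c + l)) :
    ∀ t > (0:ℝ), g t ≤ 1 / (c + l * (1 + t) ^ (-b)) ∧ 1 / (c + l * (1 + t) ^ (-b)) < 1 / c :=
  stmt15_general c l b θ p hc hl hb hθ C hC α β hα hβ g g' hg hineq hinit
end

section
/- Let g : [t₀,∞) → ℝ be nonnegative differentiable with ġ(t) ≤ -γ(t)g(t) + a(t)g(t)² + β(t), where a, β, γ are continuous and nonnegative. If μ ∈ C¹, μ > 0, satisfies a(t)/μ(t)² + β(t) ≤ (1/μ(t))(γ(t) - μ'(t)/μ(t)) for all t ≥ t₀, and μ(t₀)g(t₀) < 1, then g(t) < 1/μ(t) for all t ≥ t₀. -/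
/-!
Put `u = μ g - 1` and `c = γ - μ'/μ - a/μ`. Wherever `μ g ≤ 1` we have `a μ g² ≤ a g`, and the
compatibility condition multiplied by `μ` reads `μ β ≤ c`; together with the differential
inequality for `g` this gives `u' ≤ -c u`. A function with `u(t₀) < 0` obeying this linear
inequality on `{u ≤ 0}` stays negative: up to its first zero it lies below the Grönwall bound
`u(t₀) e^{-M (t - t₀)} < 0`, where `M` bounds `|c|`.
-/

open Set

theorem neg_right_of_deriv_le_neg_mul_of_nonpos {u u' c : ℝ → ℝ} {a b : ℝ} (hab : a ≤ b)
    (hu : ContinuousOn u (Icc a b)) (hu' : ∀ t ∈ Ico a b, HasDerivWithinAt u (u' t) (Ici t) t)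
    (hc : ContinuousOn c (Icc a b)) (hnonpos : ∀ t ∈ Ico a b, u t ≤ 0)
    (hbound : ∀ t ∈ Ico a b, u' t ≤ -c t * u t) (ha : u a < 0) : u b < 0 := by
  obtain ⟨M, hM⟩ := isCompact_Icc.exists_bound_of_continuousOn hc
  have hlin : ∀ t ∈ Ico a b, u' t ≤ -M * u t + 0 := by
    intro t ht
    have hct := abs_le.mp (hM t (Ico_subset_Icc_self ht))
    nlinarith [hbound t ht, hnonpos t ht]
  have hgronwall := le_gronwallBound_of_liminf_deriv_right_le hu
    (fun t ht _ hr => (hu' t ht).liminf_right_slope_le hr) le_rfl hlin b (right_mem_Icc.2 hab)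
  rw [gronwallBound_ε0] at hgronwall
  exact hgronwall.trans_lt (mul_neg_of_neg_of_pos ha (Real.exp_pos _))

theorem neg_of_deriv_le_neg_mul_on_nonpos {u u' c : ℝ → ℝ} {t₀ : ℝ}
    (hu : ∀ t ∈ Ici t₀, HasDerivAt u (u' t) t) (hc : ContinuousOn c (Ici t₀))
    (hbound : ∀ t ∈ Ici t₀, u t ≤ 0 → u' t ≤ -c t * u t) (h₀ : u t₀ < 0) :
    ∀ t ∈ Ici t₀, u t < 0 := by
  by_contra! hcross
  set S := Ici t₀ ∩ u ⁻¹' Ici 0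
  have hSne : S.Nonempty := hcross
  have hSbdd : BddBelow S := ⟨t₀, fun t ht => ht.1⟩
  have hucont : ContinuousOn u (Ici t₀) := fun t ht => (hu t ht).continuousAt.continuousWithinAt
  have hTS : sInf S ∈ S :=
    (hucont.preimage_isClosed_of_isClosed isClosed_Ici isClosed_Ici).csInf_mem hSne hSbdd
  have hbefore : ∀ t ∈ Ico t₀ (sInf S), u t < 0 := fun t ht =>
    not_le.mp fun h => (csInf_le hSbdd ⟨ht.1, h⟩).not_gt ht.2
  have hT := neg_right_of_deriv_le_neg_mul_of_nonpos hTS.1 (hucont.mono Icc_subset_Ici_self)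
    (fun t ht => (hu t ht.1).hasDerivWithinAt) (hc.mono Icc_subset_Ici_self)
    (fun t ht => (hbefore t ht).le) (fun t ht => hbound t ht.1 (hbefore t ht).le) h₀
  exact (not_le.mpr hT) hTS.2

theorem deriv_mul_le_of_mul_le_one {g g' μ μ' γ a β : ℝ} (hμ : 0 < μ) (hg : 0 ≤ g) (ha : 0 ≤ a)
    (hg' : g' ≤ -γ * g + a * g ^ 2 + β)
    (hcomp : a / μ ^ 2 + β ≤ (1 / μ) * (γ - μ' / μ)) (hle : μ * g ≤ 1) :
    μ' * g + μ * g' ≤ -(γ - μ' / μ - a / μ) * (μ * g - 1) := by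
  have hβ : μ * β ≤ γ - μ' / μ - a / μ := by
    have := mul_le_mul_of_nonneg_left hcomp hμ.le
    field_simp at this ⊢
    linarith
  have hquad : a * g ^ 2 * μ ≤ a * g := by
    nlinarith [mul_le_mul_of_nonneg_left hle (mul_nonneg ha hg)]
  have e1 : μ' / μ * μ = μ' := div_mul_cancel₀ _ hμ.ne'
  have e2 : a / μ * μ = a := div_mul_cancel₀ _ hμ.ne'
  nlinarith [mul_le_mul_of_nonneg_left hg' hμ.le]

theorem stmt17_general
    (t₀ : ℝ)
    (g g' γ β a μ μ' : ℝ → ℝ)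
    (hgnonneg : ∀ t ∈ Ici t₀, 0 ≤ g t)
    (hg : ∀ t ∈ Ici t₀, HasDerivAt g (g' t) t)
    (hγ : ContinuousOn γ (Ici t₀))
    (ha : ContinuousOn a (Ici t₀)) (hanonneg : ∀ t ∈ Ici t₀, 0 ≤ a t)
    (hineq : ∀ t ∈ Ici t₀, g' t ≤ -γ t * g t + a t * g t ^ 2 + β t)
    (hμpos : ∀ t ∈ Ici t₀, 0 < μ t)
    (hμ : ∀ t ∈ Ici t₀, HasDerivAt μ (μ' t) t)
    (hμ'cont : ContinuousOn μ' (Ici t₀))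
    (hcomp : ∀ t ∈ Ici t₀, a t / μ t ^ 2 + β t ≤ (1 / μ t) * (γ t - μ' t / μ t))
    (hinit : μ t₀ * g t₀ < 1) :
    ∀ t ∈ Ici t₀, g t < 1 / μ t := by
  have hμcont : ContinuousOn μ (Ici t₀) := fun t ht => (hμ t ht).continuousAt.continuousWithinAt
  have hμne : ∀ t ∈ Ici t₀, μ t ≠ 0 := fun t ht => (hμpos t ht).ne'
  have hneg := neg_of_deriv_le_neg_mul_on_nonpos (u := fun t => μ t * g t - 1)
    (c := fun t => γ t - μ' t / μ t - a t / μ t)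
    (fun t ht => ((hμ t ht).mul (hg t ht)).sub_const 1)
    ((hγ.sub (hμ'cont.div hμcont hμne)).sub (ha.div hμcont hμne))
    (fun t ht hle => deriv_mul_le_of_mul_le_one (hμpos t ht) (hgnonneg t ht) (hanonneg t ht)
      (hineq t ht) (hcomp t ht) (sub_nonpos.mp hle))
    (sub_neg.mpr hinit)
  intro t ht
  rw [lt_div_iff₀ (hμpos t ht), mul_comm]
  exact sub_neg.mp (hneg t ht)

/-- Special case `α(t,y) = a(t) y²` of the main theorem. -/
theorem stmt17
    (t₀ : ℝ) (ht₀ : 0 ≤ t₀)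
    (g g' γ β a μ μ' : ℝ → ℝ)
    (hgnonneg : ∀ t ∈ Ici t₀, 0 ≤ g t)
    (hg : ∀ t ∈ Ici t₀, HasDerivAt g (g' t) t)
    (hβ : ContinuousOn β (Ici t₀)) (hβnonneg : ∀ t ∈ Ici t₀, 0 ≤ β t)
    (hγ : ContinuousOn γ (Ici t₀)) (hγnonneg : ∀ t ∈ Ici t₀, 0 ≤ γ t)
    (ha : ContinuousOn a (Ici t₀)) (hanonneg : ∀ t ∈ Ici t₀, 0 ≤ a t)
    (hineq : ∀ t ∈ Ici t₀, g' t ≤ -γ t * g t + a t * g t ^ 2 + β t)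
    (hμpos : ∀ t ∈ Ici t₀, 0 < μ t)
    (hμ : ∀ t ∈ Ici t₀, HasDerivAt μ (μ' t) t)
    (hμ'cont : ContinuousOn μ' (Ici t₀))
    (hcomp : ∀ t ∈ Ici t₀, a t / μ t ^ 2 + β t ≤ (1 / μ t) * (γ t - μ' t / μ t))
    (hinit : μ t₀ * g t₀ < 1) :
    ∀ t ∈ Ici t₀, g t < 1 / μ t :=
  stmt17_general t₀ g g' γ β a μ μ' hgnonneg hg hγ ha hanonneg hineq hμpos hμ hμ'cont hcomp hinit
end

section
/- Let g : [t₀,∞) → ℝ be nonnegative differentiable with ġ(t) ≤ -γ(t)g(t) + a(t)g(t)^p + β(t) for some p > 1, where a, β, γ are continuous with a ≥ 0, β ≥ 0. If μ ∈ C¹, μ > 0, satisfies a(t)μ(t)^{-p} + β(t) ≤ (1/μ(t))(γ(t) - μ'(t)/μ(t)) for all t ≥ t₀ and μ(t₀)g(t₀) < 1, then g(t) < 1/μ(t) for all t ≥ t₀; if moreover μ(t) → ∞ then g(t) → 0. -/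
open Set Filter

/-!
The gap `ψ = 1/μ - g` satisfies `ψ' ≥ -γ ψ` wherever `g ≤ 1/μ`: there `a g^p ≤ a μ^(-p)`, and the
compatibility condition on `μ` absorbs the remaining terms. Such a linear differential inequality
cannot drive a positive function to zero, since `ψ` stays above `ψ(t₀) exp (-∫ (γ + 1))`. Hence
`g < 1/μ`, and `g → 0` when `μ → ∞` by squeezing.
-/

theorem exists_hasDerivAt_eq_of_continuousOn_Ici {γ : ℝ → ℝ} {t₀ : ℝ}
    (hγ : ContinuousOn γ (Ici t₀)) : ∃ Γ : ℝ → ℝ, ∀ t ∈ Ici t₀, HasDerivAt Γ (γ t) t := by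
  have hc : Continuous fun s => γ (max s t₀) :=
    hγ.comp_continuous (continuous_id.max continuous_const) fun s => le_max_right s t₀
  refine ⟨fun t => ∫ s in t₀..t, γ (max s t₀), fun t ht => ?_⟩
  simpa [max_eq_left (mem_Ici.mp ht)] using (hc.integral_hasStrictDerivAt t₀ t).hasDerivAt

theorem pos_of_neg_mul_le_deriv_s18 {ψ ψ' γ : ℝ → ℝ} {t₀ : ℝ}
    (hψ : ∀ t ∈ Ici t₀, HasDerivAt ψ (ψ' t) t) (hγ : ContinuousOn γ (Ici t₀))
    (h₀ : 0 < ψ t₀) (hψ' : ∀ t ∈ Ici t₀, 0 < ψ t → -γ t * ψ t ≤ ψ' t) :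
    ∀ t ∈ Ici t₀, 0 < ψ t := by
  obtain ⟨Γ, hΓ⟩ := exists_hasDerivAt_eq_of_continuousOn_Ici hγ
  -- the `+ 1` in the exponent makes the comparison strict where `E` and `ψ` meet
  set E : ℝ → ℝ := fun x => ψ t₀ * Real.exp (Γ t₀ + t₀ - (Γ x + x))
  have hE : ∀ x ∈ Ici t₀, HasDerivAt E (-(γ x + 1) * E x) x := fun x hx =>
    ((((hΓ x hx).fun_add (hasDerivAt_id' x)).const_sub (Γ t₀ + t₀)).exp.const_mul
      (ψ t₀)).congr_deriv (by ring)
  intro t ht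
  have hEψ : E t ≤ ψ t := by
    refine image_le_of_deriv_right_lt_deriv_boundary'
      (fun x hx => (hE x hx.1).continuousAt.continuousWithinAt)
      (fun x hx => (hE x hx.1).hasDerivWithinAt) (by simp [E])
      (fun x hx => (hψ x hx.1).continuousAt.continuousWithinAt)
      (fun x hx => (hψ x hx.1).hasDerivWithinAt) (fun x hx hEx => ?_) ⟨ht, le_rfl⟩
    have hEpos : 0 < E x := by positivity
    have hψx := hψ' x hx.1 (hEx ▸ hEpos)
    rw [← hEx] at hψx
    linarith
  exact lt_of_lt_of_le (by positivity) hEψ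

theorem neg_mul_inv_sub_le {p y y' m m' γ a β : ℝ} (hp : 0 ≤ p) (hy : 0 ≤ y) (hm : 0 < m)
    (hym : y ≤ m⁻¹) (ha : 0 ≤ a) (hy' : y' ≤ -γ * y + a * y ^ p + β)
    (hcomp : a * m ^ (-p) + β ≤ (1 / m) * (γ - m' / m)) :
    -γ * (m⁻¹ - y) ≤ -m' / m ^ 2 - y' := by
  have hpow : a * y ^ p ≤ a * m ^ (-p) := by
    rw [Real.rpow_neg hm.le, ← Real.inv_rpow hm.le]
    exact mul_le_mul_of_nonneg_left (Real.rpow_le_rpow hy hym hp) ha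
  have hcomp' : (1 / m) * (γ - m' / m) = γ * m⁻¹ - m' / m ^ 2 := by field_simp
  rw [neg_div]
  linarith

theorem stmt18_general
    (t₀ : ℝ) (p : ℝ) (hp : 1 < p)
    (g g' γ β a μ μ' : ℝ → ℝ)
    (hgnonneg : ∀ t ∈ Ici t₀, 0 ≤ g t)
    (hg : ∀ t ∈ Ici t₀, HasDerivAt g (g' t) t)
    (hγ : ContinuousOn γ (Ici t₀))
    (hanonneg : ∀ t ∈ Ici t₀, 0 ≤ a t)
    (hineq : ∀ t ∈ Ici t₀, g' t ≤ -γ t * g t + a t * g t ^ p + β t)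
    (hμpos : ∀ t ∈ Ici t₀, 0 < μ t)
    (hμ : ∀ t ∈ Ici t₀, HasDerivAt μ (μ' t) t)
    (hcomp : ∀ t ∈ Ici t₀, a t * μ t ^ (-p) + β t ≤ (1 / μ t) * (γ t - μ' t / μ t))
    (hinit : μ t₀ * g t₀ < 1) :
    (∀ t ∈ Ici t₀, g t < 1 / μ t) ∧
      (Tendsto μ atTop atTop → Tendsto g atTop (nhds 0)) := by
  have hgap : ∀ t ∈ Ici t₀, 0 < (μ t)⁻¹ - g t := by
    refine pos_of_neg_mul_le_deriv_s18 (fun t ht => ((hμ t ht).inv (hμpos t ht).ne').sub (hg t ht))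
      hγ ?_ fun t ht hpos => neg_mul_inv_sub_le (by linarith) (hgnonneg t ht) (hμpos t ht)
        (sub_pos.mp hpos).le (hanonneg t ht) (hineq t ht) (hcomp t ht)
    rw [sub_pos, ← one_div, lt_div_iff₀ (hμpos t₀ self_mem_Ici)]
    linarith
  have hlt : ∀ t ∈ Ici t₀, g t < 1 / μ t := fun t ht => by
    simpa [one_div, sub_pos] using hgap t ht
  refine ⟨hlt, fun hμtop => ?_⟩
  refine tendsto_of_tendsto_of_tendsto_of_le_of_le' tendsto_const_nhds hμtop.inv_tendsto_atTop
    ?_ ?_ <;> filter_upwards [eventually_ge_atTop t₀] with t ht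
  · exact hgnonneg t ht
  · simpa [one_div] using (hlt t ht).le

/-- Special case `α(t,y) = a(t) y^p`, `p > 1`, of the main theorem. -/
theorem stmt18
    (t₀ : ℝ) (ht₀ : 0 ≤ t₀) (p : ℝ) (hp : 1 < p)
    (g g' γ β a μ μ' : ℝ → ℝ)
    (hgnonneg : ∀ t ∈ Ici t₀, 0 ≤ g t)
    (hg : ∀ t ∈ Ici t₀, HasDerivAt g (g' t) t)
    (hβ : ContinuousOn β (Ici t₀)) (hβnonneg : ∀ t ∈ Ici t₀, 0 ≤ β t)
    (hγ : ContinuousOn γ (Ici t₀))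
    (ha : ContinuousOn a (Ici t₀)) (hanonneg : ∀ t ∈ Ici t₀, 0 ≤ a t)
    (hineq : ∀ t ∈ Ici t₀, g' t ≤ -γ t * g t + a t * g t ^ p + β t)
    (hμpos : ∀ t ∈ Ici t₀, 0 < μ t)
    (hμ : ∀ t ∈ Ici t₀, HasDerivAt μ (μ' t) t)
    (hμ'cont : ContinuousOn μ' (Ici t₀))
    (hcomp : ∀ t ∈ Ici t₀, a t * μ t ^ (-p) + β t ≤ (1 / μ t) * (γ t - μ' t / μ t))
    (hinit : μ t₀ * g t₀ < 1) :
    (∀ t ∈ Ici t₀, g t < 1 / μ t) ∧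
      (Tendsto μ atTop atTop → Tendsto g atTop (nhds 0)) :=
  stmt18_general t₀ p hp g g' γ β a μ μ' hgnonneg hg hγ hanonneg hineq hμpos hμ hcomp hinit
end

section
/- Let (g_n), (β_n) be nonnegative sequences, (γ_n) with 0 < γ_n < 1, a_n ≥ 0, p > 1, and g_{n+1} ≤ (1-γ_n)g_n + a_n g_n^p + β_n for all n. If there is a positive sequence (μ_n) with g_0 ≤ 1/μ_0 and a_n μ_n^{-p} + β_n ≤ (1/μ_n)(γ_n - (μ_{n+1}-μ_n)/μ_n) for all n, then g_n ≤ 1/μ_n for all n ≥ 0. -/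
/-- Discrete special case `α(n,y) = a_n y^p`, `p > 1`. -/
theorem stmt19
    (p : ℝ) (hp : 1 < p)
    (g β γ a μ : ℕ → ℝ)
    (hgnonneg : ∀ n, 0 ≤ g n)
    (hβnonneg : ∀ n, 0 ≤ β n)
    (hγ : ∀ n, 0 < γ n ∧ γ n < 1)
    (hanonneg : ∀ n, 0 ≤ a n)
    (hineq : ∀ n, g (n + 1) ≤ (1 - γ n) * g n + a n * g n ^ p + β n)
    (hμpos : ∀ n, 0 < μ n)
    (hinit : g 0 ≤ 1 / μ 0)
    (hcomp : ∀ n, a n * μ n ^ (-p) + β n ≤ (1 / μ n) * (γ n - (μ (n + 1) - μ n) / μ n)) :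
    ∀ n, g n ≤ 1 / μ n := by
  intro n
  induction n with
  | zero => exact hinit
  | succ n ih =>
    have hμ := hμpos n
    have hμ' := hμpos (n + 1)
    have hγ1 := (hγ n).2
    have h1 : g n ^ p ≤ μ n ^ (-p) := by
      rw [Real.rpow_neg hμ.le, ← Real.inv_rpow hμ.le, ← one_div]
      exact Real.rpow_le_rpow (hgnonneg n) ih (by linarith)
    have h2 : g (n + 1) ≤ (1 - γ n) * (1 / μ n) + (a n * μ n ^ (-p) + β n) := by
      have h3 := hineq n
      have h4 : a n * g n ^ p ≤ a n * μ n ^ (-p) :=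
        mul_le_mul_of_nonneg_left h1 (hanonneg n)
      have h5 : (1 - γ n) * g n ≤ (1 - γ n) * (1 / μ n) :=
        mul_le_mul_of_nonneg_left ih (by linarith)
      linarith
    have h6 : (1 - γ n) * (1 / μ n) + (1 / μ n) * (γ n - (μ (n + 1) - μ n) / μ n)
        ≤ 1 / μ (n + 1) := by
      have heq : (1 - γ n) * (1 / μ n) + 1 / μ n * (γ n - (μ (n + 1) - μ n) / μ n)
          = (2 * μ n - μ (n + 1)) / (μ n * μ n) := by
        field_simp
        ring
      rw [heq, div_le_div_iff₀ (by positivity) hμ']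
      nlinarith [sq_nonneg (μ n - μ (n + 1))]
    calc g (n + 1) ≤ (1 - γ n) * (1 / μ n) + (a n * μ n ^ (-p) + β n) := h2
      _ ≤ (1 - γ n) * (1 / μ n) + (1 / μ n) * (γ n - (μ (n + 1) - μ n) / μ n) := by
          linarith [hcomp n]
      _ ≤ 1 / μ (n + 1) := h6
end
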